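/- Let s be a square root on an MV-algebra M. Then the element w := s(0)'⊙s(0)' is idempotent: w⊙w = w. -/
import Mathlib


class MVAlg (M : Type*) where
  add : M → M → M
  compl : M → M
  zero : M
  one : M
  add_comm : ∀ x y, add x y = add y x
  add_assoc : ∀ x y z, add (add x y) z = add x (add y z)
  add_zero : ∀ x, add x zero = x
  compl_compl : ∀ x, compl (compl x) = x
  add_one : ∀ x, add x one = one
  chang : ∀ x y, add x (compl (add x (compl y))) = add y (compl (add y (compl x)))
  compl_zero : compl zero = one

namespace MVAlg

variable {M : Type*} [MVAlg M]

/-- x ⊙ y := (x' ⊕ y')' -/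
def odot (x y : M) : M := compl (add (compl x) (compl y))

/-- x ≤ y iff x' ⊕ y = 1 -/
def le (x y : M) : Prop := add (compl x) y = one

/-- x ∧ y := x ⊙ (x' ⊕ y) -/
def inf (x y : M) : M := odot x (add (compl x) y)

/-- x ∨ y := (x ⊙ y') ⊕ y -/
def sup (x y : M) : M := add (odot x (compl y)) y

/-- x ⊖ y := x ⊙ y' -/
def sub (x y : M) : M := odot x (compl y)

/-- A square root on an MV-algebra. -/
def IsSquareRoot (s : M → M) : Prop :=
  (∀ x : M, odot (s x) (s x) = x) ∧ ∀ x y : M, le (odot y y) x → le y (s x)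

end MVAlg

namespace MVAlg

variable {M : Type*} [MVAlg M]

lemma compl_one : (compl (one : M)) = zero := by
  rw [← compl_zero, compl_compl]

lemma one_add (x : M) : add one x = one := by rw [add_comm, add_one]

lemma add_compl (x : M) : add x (compl x) = one := by
  have h := chang x (one : M)
  rw [compl_one, add_zero, one_add] at h
  exact h

lemma compl_add (x : M) : add (compl x) x = one := by
  rw [add_comm, add_compl]

lemma le_antisymm' {x y : M} (h1 : le x y) (h2 : le y x) : x = y := by
  have hc := chang x y
  unfold le at h1 h2
  rw [add_comm] at h1 h2
  rw [h1, h2, compl_one, add_zero, add_zero] at hc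
  exact hc

/-- If x ⊕ x = x then x' ⊕ x' = x'. -/
lemma addidem_compl {x : M} (h : add x x = x) :
    add (compl x) (compl x) = compl x := by
  apply le_antisymm'
  · -- le (x'⊕x') x'
    have hc := chang (compl x) x
    rw [compl_compl, h, add_compl] at hc
    unfold le
    rw [add_comm]
    exact hc
  · -- le x' (x'⊕x')
    unfold le
    rw [compl_compl, ← add_assoc, add_compl, one_add]

end MVAlg

theorem sqrt_zero_compl_sq_idem {M : Type*} [MVAlg M] (s : M → M)
    (hs : MVAlg.IsSquareRoot s) :
    MVAlg.odot (MVAlg.odot (MVAlg.compl (s MVAlg.zero)) (MVAlg.compl (s MVAlg.zero)))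
        (MVAlg.odot (MVAlg.compl (s MVAlg.zero)) (MVAlg.compl (s MVAlg.zero))) =
      MVAlg.odot (MVAlg.compl (s MVAlg.zero)) (MVAlg.compl (s MVAlg.zero)) := by
  open MVAlg in
  obtain ⟨h1, h2⟩ := hs
  set a := s MVAlg.zero with ha
  set u := MVAlg.add a a with hu
  set d := s u with hd
  -- d ⊙ d = u, hence d' ⊕ d' = u'
  have hdd : MVAlg.odot d d = u := h1 u
  have hdd' : MVAlg.add (MVAlg.compl d) (MVAlg.compl d) = MVAlg.compl u := by
    rw [← hdd]; unfold MVAlg.odot; rw [MVAlg.compl_compl]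
  -- u ≤ d
  have hud : MVAlg.le u d := by
    apply h2
    unfold MVAlg.le MVAlg.odot
    rw [MVAlg.compl_compl, MVAlg.add_assoc, MVAlg.compl_add, MVAlg.add_one]
  -- d ≤ u
  have hdu : MVAlg.le d u := by
    have key : MVAlg.le (MVAlg.odot (MVAlg.odot d (MVAlg.compl a))
        (MVAlg.odot d (MVAlg.compl a))) MVAlg.zero := by
      unfold MVAlg.le MVAlg.odot
      rw [MVAlg.compl_compl, MVAlg.compl_compl, MVAlg.compl_compl]
      have e1 : MVAlg.add (MVAlg.add (MVAlg.compl d) a) (MVAlg.add (MVAlg.compl d) a)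
          = MVAlg.add (MVAlg.add (MVAlg.compl d) (MVAlg.compl d)) (MVAlg.add a a) := by
        rw [MVAlg.add_assoc, MVAlg.add_assoc]
        congr 1
        rw [← MVAlg.add_assoc, ← MVAlg.add_assoc, MVAlg.add_comm a (MVAlg.compl d)]
      rw [e1, hdd', ← hu, MVAlg.compl_add, MVAlg.add_zero]
    have := h2 MVAlg.zero (MVAlg.odot d (MVAlg.compl a)) key
    unfold MVAlg.le MVAlg.odot at this
    unfold MVAlg.le
    rw [MVAlg.compl_compl, MVAlg.compl_compl] at this
    rw [hu, ← MVAlg.add_assoc]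
    exact this
  have hdeq : d = u := MVAlg.le_antisymm' hdu hud
  -- u' ⊕ u' = u'
  have huu' : MVAlg.add (MVAlg.compl u) (MVAlg.compl u) = MVAlg.compl u := by
    rw [hdeq] at hdd'
    exact hdd'
  -- u ⊕ u = u
  have huu : MVAlg.add u u = u := by
    have := MVAlg.addidem_compl huu'
    rwa [MVAlg.compl_compl] at this
  -- finish
  show MVAlg.odot (MVAlg.odot (MVAlg.compl a) (MVAlg.compl a))
      (MVAlg.odot (MVAlg.compl a) (MVAlg.compl a)) = _
  unfold MVAlg.odot
  rw [MVAlg.compl_compl, MVAlg.compl_compl, ← hu, huu]
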